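/- arXiv:2405.12660 — 2 statements merged into one kernel-verified Lean document; each statement's English description precedes it below -/
import Mathlib

section
/- Let (U, 𝒞) be a convex geometry with n = |U|, let ℛ₀ be the set of critical rooted circuits of 𝒞, and let K(ℛ₀) = ⋂_{(C,r) ∈ ℛ₀} K(C, r). Then for every X ⊆ U: the orthant 𝒪(X) intersects K(ℛ₀) if and only if X ∈ 𝒞. Consequently, 𝒞 is realized by the intersection pattern of the orthants of ℝ^n with an open convex polyhedral cone having at most m facets, where m is the number of critical rooted circuits of 𝒞. -/
open Finset

/-- A convex geometry on the finite ground set `α` (the universe `U` is all of `α`). -/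
def IsConvexGeometry {α : Type*} [Fintype α] [DecidableEq α] (𝒞 : Set (Finset α)) : Prop :=
  (∅ : Finset α) ∈ 𝒞 ∧ (univ : Finset α) ∈ 𝒞 ∧
    (∀ X ∈ 𝒞, ∀ Y ∈ 𝒞, X ∩ Y ∈ 𝒞) ∧
    ∀ X ∈ 𝒞, X ≠ univ → ∃ e ∉ X, insert e X ∈ 𝒞

/-- `(C, r)` is a rooted circuit of `𝒞`: `r ∈ C` and the trace of `𝒞` on `C` is
`2^C \ {C \ {r}}`. -/
def IsRootedCircuit {α : Type*} [DecidableEq α] (𝒞 : Set (Finset α)) (C : Finset α)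
    (r : α) : Prop :=
  r ∈ C ∧ {Y : Finset α | ∃ X ∈ 𝒞, X ∩ C = Y} = {Y : Finset α | Y ⊆ C ∧ Y ≠ C.erase r}

/-- `(C, r)` is a critical rooted circuit: it is a rooted circuit and, for
`D = conv(C)` (the smallest member of `𝒞` containing `C`), `D \ {r} ∉ 𝒞` while
`D \ {r, b} ∈ 𝒞` for every `b ∈ C \ {r}`. -/
def IsCriticalRootedCircuit {α : Type*} [DecidableEq α] (𝒞 : Set (Finset α))
    (C : Finset α) (r : α) : Prop :=
  IsRootedCircuit 𝒞 C r ∧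
    ∃ D ∈ 𝒞, C ⊆ D ∧ (∀ D' ∈ 𝒞, C ⊆ D' → D ⊆ D') ∧
      D.erase r ∉ 𝒞 ∧ ∀ b ∈ C.erase r, (D.erase r).erase b ∈ 𝒞

/-- The open `X`-orthant of `ℝ^U`. -/
def Orthant {α : Type*} (X : Finset α) : Set (α → ℝ) :=
  {x | (∀ e ∈ X, 0 < x e) ∧ ∀ e ∉ X, x e < 0}

/-- The open halfspace `K(C, r) = {x : n·x_r > Σ_{e ∈ C \ {r}} x_e}`, where `n = |U|`. -/
def Kcr {α : Type*} [Fintype α] [DecidableEq α] (C : Finset α) (r : α) : Set (α → ℝ) :=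
  {x | (∑ e ∈ C.erase r, x e) < (Fintype.card α : ℝ) * x r}

section Aux

variable {α : Type*} [Fintype α] [DecidableEq α]

open Classical in
/-- The convex hull operator of the closure system `𝒞`. -/
noncomputable def convG (𝒞 : Set (Finset α)) (A : Finset α) : Finset α :=
  univ.filter fun e => ∀ W ∈ 𝒞, A ⊆ W → e ∈ W

lemma mem_convG {𝒞 : Set (Finset α)} {A : Finset α} {e : α} :
    e ∈ convG 𝒞 A ↔ ∀ W ∈ 𝒞, A ⊆ W → e ∈ W := by
  simp [convG]

lemma subset_convG {𝒞 : Set (Finset α)} {A : Finset α} : A ⊆ convG 𝒞 A :=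
  fun a ha => mem_convG.mpr fun _ _ hAW => hAW ha

lemma convG_min {𝒞 : Set (Finset α)} {A W : Finset α} (hW : W ∈ 𝒞) (hAW : A ⊆ W) :
    convG 𝒞 A ⊆ W := fun _ he => mem_convG.mp he W hW hAW

lemma convG_mono {𝒞 : Set (Finset α)} {A B : Finset α} (h : A ⊆ B) :
    convG 𝒞 A ⊆ convG 𝒞 B :=
  fun _ he => mem_convG.mpr fun W hW hBW => mem_convG.mp he W hW (h.trans hBW)

lemma convG_eq {𝒞 : Set (Finset α)} {X : Finset α} (hX : X ∈ 𝒞) : convG 𝒞 X = X :=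
  subset_antisymm (convG_min hX subset_rfl) subset_convG

lemma convG_mem {𝒞 : Set (Finset α)} (hCG : IsConvexGeometry 𝒞) (A : Finset α) :
    convG 𝒞 A ∈ 𝒞 := by
  classical
  obtain ⟨-, huniv, hinter, -⟩ := hCG
  set S : Finset (Finset α) := univ.filter (fun W => W ∈ 𝒞 ∧ A ⊆ W) with hS
  have hne : S.Nonempty := ⟨univ, by simp [hS, huniv]⟩
  obtain ⟨D, hDS, hDmin⟩ := S.exists_min_image card hne
  simp only [hS, mem_filter, mem_univ, true_and] at hDS
  obtain ⟨hD𝒞, hAD⟩ := hDS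
  have hDsub : ∀ W ∈ 𝒞, A ⊆ W → D ⊆ W := by
    intro W hW hAW
    have h1 : D ∩ W ∈ S := by
      simp only [hS, mem_filter, mem_univ, true_and]
      exact ⟨hinter D hD𝒞 W hW, subset_inter hAD hAW⟩
    have h2 := hDmin _ h1
    have h3 : D ∩ W = D := eq_of_subset_of_card_le inter_subset_left h2
    intro a ha
    exact (mem_inter.mp (h3 ▸ ha)).2
  have : convG 𝒞 A = D := by
    apply subset_antisymm (convG_min hD𝒞 hAD)
    intro e he
    exact mem_convG.mpr fun W hW hAW => hDsub W hW hAW he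
  rw [this]; exact hD𝒞

lemma rel_ext_aux {𝒞 : Set (Finset α)} (hCG : IsConvexGeometry 𝒞) :
    ∀ n : ℕ, ∀ Y : Finset α, (univ \ Y).card ≤ n → Y ∈ 𝒞 →
      ∀ W ∈ 𝒞, ¬ W ⊆ Y → ∃ e ∈ W, e ∉ Y ∧ insert e (Y ∩ W) ∈ 𝒞 := by
  intro n
  induction n with
  | zero =>
    intro Y hcard hY W hW hWY
    exfalso
    apply hWY
    have h1 : univ \ Y = ∅ := card_eq_zero.mp (Nat.le_antisymm hcard (Nat.zero_le _))
    have h2 : (univ : Finset α) ⊆ Y := sdiff_eq_empty_iff_subset.mp h1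
    exact (subset_univ W).trans h2
  | succ n ih =>
    intro Y hcard hY W hW hWY
    have hYuniv : Y ≠ univ := by rintro rfl; exact hWY (subset_univ W)
    obtain ⟨e₀, he₀Y, hY'⟩ := hCG.2.2.2 Y hY hYuniv
    by_cases he₀W : e₀ ∈ W
    · refine ⟨e₀, he₀W, he₀Y, ?_⟩
      have h : insert e₀ Y ∩ W = insert e₀ (Y ∩ W) := insert_inter_of_mem he₀W
      rw [← h]
      exact hCG.2.2.1 _ hY' _ hW
    · have hc : (univ \ insert e₀ Y).card ≤ n := by
        have h1 : univ \ insert e₀ Y = (univ \ Y).erase e₀ := by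
          ext a; simp only [mem_sdiff, mem_univ, true_and, mem_insert, mem_erase, not_or]
        have h2 : e₀ ∈ univ \ Y := by simp [he₀Y]
        rw [h1, card_erase_of_mem h2]
        have := card_pos.mpr ⟨e₀, h2⟩
        omega
      have hWY' : ¬ W ⊆ insert e₀ Y := by
        intro h
        apply hWY
        intro w hw
        rcases mem_insert.mp (h hw) with h1 | h1
        · exact absurd (h1 ▸ hw) he₀W
        · exact h1
      obtain ⟨e, heW, heY', hmem⟩ := ih (insert e₀ Y) hc hY' W hW hWY'
      refine ⟨e, heW, fun h => heY' (mem_insert_of_mem h), ?_⟩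
      have h : insert e₀ Y ∩ W = Y ∩ W := by
        ext a
        simp only [mem_inter, mem_insert]
        constructor
        · rintro ⟨h1 | h1, h2⟩
          · exact absurd (h1 ▸ h2) he₀W
          · exact ⟨h1, h2⟩
        · rintro ⟨h1, h2⟩; exact ⟨Or.inr h1, h2⟩
      rwa [h] at hmem

lemma rel_ext {𝒞 : Set (Finset α)} (hCG : IsConvexGeometry 𝒞) {Y W : Finset α}
    (hY : Y ∈ 𝒞) (hW : W ∈ 𝒞) (hYW : Y ⊆ W) (hne : Y ≠ W) :
    ∃ e ∈ W, e ∉ Y ∧ insert e Y ∈ 𝒞 := by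
  have h : ¬ W ⊆ Y := fun h => hne (subset_antisymm hYW h)
  obtain ⟨e, h1, h2, h3⟩ := rel_ext_aux hCG _ Y le_rfl hY W hW h
  rw [inter_eq_left.mpr hYW] at h3
  exact ⟨e, h1, h2, h3⟩

end Aux

section Aux2

variable {α : Type*} [Fintype α] [DecidableEq α]

lemma anti_exchange {𝒞 : Set (Finset α)} (hCG : IsConvexGeometry 𝒞) {S : Finset α}
    {p q : α} (hpq : p ≠ q) (hp : p ∉ convG 𝒞 S) (hq : q ∉ convG 𝒞 S)
    (h : q ∈ convG 𝒞 (insert p S)) : p ∉ convG 𝒞 (insert q S) := by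
  intro hcon
  set W := convG 𝒞 (insert p S) with hWdef
  have hW𝒞 : W ∈ 𝒞 := convG_mem hCG _
  have hpW : p ∈ W := subset_convG (mem_insert_self p S)
  have hqW : q ∈ W := h
  have hWsub : ∀ Y : Finset α, Y ∈ 𝒞 → insert p S ⊆ Y → W ⊆ Y := fun Y h1 h2 => convG_min h1 h2
  have hSW : convG 𝒞 S ⊆ W := convG_mono (subset_insert p S)
  clear_value W
  clear hWdef h
  have aux : ∀ m : ℕ, ∀ Y : Finset α, Y ∈ 𝒞 → S ⊆ Y → Y ⊆ W → p ∉ Y → q ∉ Y →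
      (W \ Y).card ≤ m → False := by
    intro m
    induction m with
    | zero =>
      intro Y _ _ _ hpY _ hcard
      have h1 : W \ Y = ∅ := card_eq_zero.mp (Nat.le_antisymm hcard (Nat.zero_le _))
      exact hpY (sdiff_eq_empty_iff_subset.mp h1 hpW)
    | succ m ih =>
      intro Y hY hSY hYW hpY hqY hcard
      have hne : Y ≠ W := fun hh => hpY (hh ▸ hpW)
      obtain ⟨e, heW, heY, hins⟩ := rel_ext hCG hY hW𝒞 hYW hne
      by_cases hep : e = p
      · subst hep
        have h1 : insert e S ⊆ insert e Y := insert_subset_insert _ hSY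
        have h2 : q ∈ insert e Y := hWsub _ hins h1 hqW
        rcases mem_insert.mp h2 with h3 | h3
        · exact hpq h3.symm
        · exact hqY h3
      · by_cases heq : e = q
        · subst heq
          have h1 : insert e S ⊆ insert e Y := insert_subset_insert _ hSY
          have h2 : p ∈ insert e Y := convG_min hins h1 hcon
          rcases mem_insert.mp h2 with h3 | h3
          · exact hpq h3
          · exact hpY h3
        · refine ih (insert e Y) hins (hSY.trans (subset_insert _ _))
            (insert_subset heW hYW) ?_ ?_ ?_
          · intro hc
            rcases mem_insert.mp hc with h3 | h3
            · exact hep h3.symm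
            · exact hpY h3
          · intro hc
            rcases mem_insert.mp hc with h3 | h3
            · exact heq h3.symm
            · exact hqY h3
          · have h1 : W \ insert e Y = (W \ Y).erase e := by
              ext a
              simp only [mem_sdiff, mem_insert, mem_erase, not_or]
              tauto
            have h2 : e ∈ W \ Y := mem_sdiff.mpr ⟨heW, heY⟩
            rw [h1, card_erase_of_mem h2]
            have := card_pos.mpr ⟨e, h2⟩
            omega
  exact aux (W \ convG 𝒞 S).card (convG 𝒞 S) (convG_mem hCG S) subset_convG
    hSW hp hq le_rfl

lemma exists_coatom {𝒞 : Set (Finset α)} (hCG : IsConvexGeometry 𝒞) {Z E : Finset α}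
    (hZ : Z ∈ 𝒞) (hE : E ∈ 𝒞) (hZE : Z ⊆ E) (hne : Z ≠ E) :
    ∃ u ∈ E, u ∉ Z ∧ E.erase u ∈ 𝒞 ∧ Z ⊆ E.erase u := by
  classical
  set S : Finset (Finset α) :=
    univ.filter (fun Y => Y ∈ 𝒞 ∧ Z ⊆ Y ∧ Y ⊆ E ∧ Y ≠ E) with hS
  have hSne : S.Nonempty := ⟨Z, by simp [hS, hZ, hZE, hne]⟩
  obtain ⟨Y, hYS, hYmax⟩ := S.exists_max_image card hSne
  simp only [hS, mem_filter, mem_univ, true_and] at hYS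
  obtain ⟨hY𝒞, hZY, hYE, hYneE⟩ := hYS
  obtain ⟨e, heE, heY, hins⟩ := rel_ext hCG hY𝒞 hE hYE hYneE
  have hinsE : insert e Y ⊆ E := insert_subset heE hYE
  have heq : insert e Y = E := by
    by_contra hne2
    have h1 : insert e Y ∈ S := by
      simp only [hS, mem_filter, mem_univ, true_and]
      exact ⟨hins, hZY.trans (subset_insert _ _), hinsE, hne2⟩
    have h2 := hYmax _ h1
    rw [card_insert_of_notMem heY] at h2
    omega
  have hYeq : Y = E.erase e := by rw [← heq, erase_insert heY]
  exact ⟨e, heE, fun hc => heY (hZY hc), hYeq ▸ hY𝒞, hYeq ▸ hZY⟩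

end Aux2

section Aux3

variable {α : Type*} [Fintype α] [DecidableEq α]

lemma key_crit {𝒞 : Set (Finset α)} (hCG : IsConvexGeometry 𝒞) {D : Finset α}
    (hD : D ∈ 𝒞) {r : α} (hr : r ∈ convG 𝒞 (D.erase r)) :
    ∃ C : Finset α, IsCriticalRootedCircuit 𝒞 C r ∧ C ⊆ D := by
  classical
  -- choose a minimal closed subset E of D in which r is not extreme
  set T : Finset (Finset α) :=
    univ.filter (fun E => E ∈ 𝒞 ∧ E ⊆ D ∧ r ∈ convG 𝒞 (E.erase r)) with hT
  have hTne : T.Nonempty := ⟨D, by simp [hT, hD, hr]⟩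
  obtain ⟨E, hET, hEmin0⟩ := T.exists_min_image card hTne
  simp only [hT, mem_filter, mem_univ, true_and] at hET
  obtain ⟨hE𝒞, hED, hrE⟩ := hET
  have hEmin : ∀ Y : Finset α, Y ∈ 𝒞 → Y ⊆ D → r ∈ convG 𝒞 (Y.erase r) →
      E.card ≤ Y.card := by
    intro Y h1 h2 h3
    exact hEmin0 Y (by simp only [hT, mem_filter, mem_univ, true_and]; exact ⟨h1, h2, h3⟩)
  have hrEmem : r ∈ E := convG_min hE𝒞 (erase_subset _ _) hrE
  -- the set of coatom-generators
  set B : Finset α := (E.erase r).filter (fun b => (E.erase r).erase b ∈ 𝒞) with hB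
  have hBE : B ⊆ E.erase r := filter_subset _ _
  -- r lies in the hull of B
  have hrB : r ∈ convG 𝒞 B := by
    by_contra hrZ
    have hZ𝒞 : convG 𝒞 B ∈ 𝒞 := convG_mem hCG B
    have hZE : convG 𝒞 B ⊆ E := convG_min hE𝒞 (hBE.trans (erase_subset _ _))
    have hZne : convG 𝒞 B ≠ E := fun hh => hrZ (hh ▸ hrEmem)
    obtain ⟨u, huE, huZ, hEu𝒞, hZEu⟩ := exists_coatom hCG hZ𝒞 hE𝒞 hZE hZne
    by_cases hur : u = r
    · subst hur
      rw [convG_eq hEu𝒞] at hrE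
      exact (notMem_erase u E) hrE
    · have hrY : r ∈ E.erase u := mem_erase.mpr ⟨fun hh => hur hh.symm, hrEmem⟩
      by_cases hYr : (E.erase u).erase r ∈ 𝒞
      · have huB : u ∈ B := by
          refine mem_filter.mpr ⟨mem_erase.mpr ⟨hur, huE⟩, ?_⟩
          rw [erase_right_comm]
          exact hYr
        exact huZ (subset_convG huB)
      · -- r ∈ convG ((E.erase u).erase r), contradicting minimality of E
        have h1 : convG 𝒞 ((E.erase u).erase r) ⊆ E.erase u :=
          convG_min hEu𝒞 (erase_subset _ _)
        have h2 : convG 𝒞 ((E.erase u).erase r) ≠ (E.erase u).erase r :=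
          fun hh => hYr (hh ▸ convG_mem hCG _)
        have h3 : r ∈ convG 𝒞 ((E.erase u).erase r) := by
          obtain ⟨z, hz1, hz2⟩ : ∃ z ∈ convG 𝒞 ((E.erase u).erase r),
              z ∉ (E.erase u).erase r := by
            by_contra hc
            push_neg at hc
            exact h2 (subset_antisymm hc subset_convG)
          have hzY : z ∈ E.erase u := h1 hz1
          have hzr : z = r := by
            by_contra hzr
            exact hz2 (mem_erase.mpr ⟨hzr, hzY⟩)
          exact hzr ▸ hz1
        have h4 := hEmin _ hEu𝒞 ((erase_subset _ _).trans hED) h3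
        have h5 : (E.erase u).card < E.card := card_erase_lt_of_mem huE
        omega
  -- choose a minimal subset A of B whose hull contains r
  set P : Finset (Finset α) := B.powerset.filter (fun A => r ∈ convG 𝒞 A) with hP
  have hPne : P.Nonempty := ⟨B, mem_filter.mpr ⟨mem_powerset_self B, hrB⟩⟩
  obtain ⟨A, hAP, hAmin0⟩ := P.exists_min_image card hPne
  obtain ⟨hAB', hrA⟩ := mem_filter.mp hAP
  have hAB : A ⊆ B := mem_powerset.mp hAB'
  have hAmin : ∀ A' : Finset α, A' ⊆ A → A' ≠ A → r ∉ convG 𝒞 A' := by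
    intro A' hsub hne hrA'
    have h1 := hAmin0 A' (mem_filter.mpr ⟨mem_powerset.mpr (hsub.trans hAB), hrA'⟩)
    have h2 : A'.card < A.card := card_lt_card ⟨hsub, fun hh => hne (subset_antisymm hsub hh)⟩
    omega
  have hAEr : A ⊆ E.erase r := hAB.trans hBE
  have hrnA : r ∉ A := fun hh => (notMem_erase r E) (hAEr hh)
  have hAEsub : A ⊆ E := hAEr.trans (erase_subset _ _)
  -- the hull of A is all of E
  have hAE : convG 𝒞 A = E := by
    have hsub : convG 𝒞 A ⊆ E := convG_min hE𝒞 hAEsub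
    have h1 : A ⊆ (convG 𝒞 A).erase r := fun a ha =>
      mem_erase.mpr ⟨fun hh => hrnA (hh ▸ ha), subset_convG ha⟩
    have h2 : r ∈ convG 𝒞 ((convG 𝒞 A).erase r) := convG_mono h1 hrA
    have h3 := hEmin (convG 𝒞 A) (convG_mem hCG A) (hsub.trans hED) h2
    exact eq_of_subset_of_card_le hsub h3
  -- extremality of the elements of A
  have hext : ∀ a ∈ A, a ∉ convG 𝒞 (A.erase a) := by
    intro a ha hcon
    have h1 : A ⊆ convG 𝒞 (A.erase a) := by
      intro b hb
      by_cases hba : b = a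
      · exact hba ▸ hcon
      · exact subset_convG (mem_erase.mpr ⟨hba, hb⟩)
    have h2 : convG 𝒞 A ⊆ convG 𝒞 (A.erase a) := convG_min (convG_mem hCG _) h1
    refine hAmin (A.erase a) (erase_subset _ _) ?_ (h2 hrA)
    intro hh
    exact (erase_eq_self.mp hh) ha
  set C : Finset α := insert r A with hC
  have hCer : C.erase r = A := erase_insert hrnA
  have hCE : C ⊆ E := insert_subset hrEmem hAEsub
  refine ⟨C, ⟨⟨mem_insert_self r A, ?_⟩, E, hE𝒞, hCE, ?_, ?_, ?_⟩, hCE.trans hED⟩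
  · -- trace condition
    ext Y
    simp only [Set.mem_setOf_eq, hCer]
    constructor
    · rintro ⟨X, hX𝒞, rfl⟩
      refine ⟨inter_subset_right, ?_⟩
      intro hXA
      have hAX : A ⊆ X := by
        intro a ha
        rw [← hXA] at ha
        exact (mem_inter.mp ha).1
      have hrX : r ∈ X := convG_min hX𝒞 hAX hrA
      have hmem : r ∈ X ∩ C := mem_inter.mpr ⟨hrX, mem_insert_self r A⟩
      rw [hXA] at hmem
      exact hrnA hmem
    · rintro ⟨hYC, hYne⟩
      by_cases hrY : r ∈ Y
      · by_cases hYeq : Y = C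
        · exact ⟨univ, hCG.2.1, by rw [univ_inter, hYeq]⟩
        · refine ⟨convG 𝒞 Y, convG_mem hCG Y, ?_⟩
          refine subset_antisymm ?_ (subset_inter subset_convG hYC)
          intro z hz
          obtain ⟨hz1, hz2⟩ := mem_inter.mp hz
          rcases mem_insert.mp hz2 with rfl | hzA
          · exact hrY
          · by_contra hzY
            have hzr : z ≠ r := fun hh => hrnA (hh ▸ hzA)
            have hYsub : Y ⊆ insert r (A.erase z) := by
              intro y hy
              rcases mem_insert.mp (hYC hy) with rfl | hyA
              · exact mem_insert_self _ _
              · exact mem_insert_of_mem (mem_erase.mpr ⟨fun hh => hzY (hh ▸ hy), hyA⟩)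
            have hzA' : z ∈ convG 𝒞 (insert r (A.erase z)) := convG_mono hYsub hz1
            have hz_notA' : z ∉ convG 𝒞 (A.erase z) := hext z hzA
            have hr_notA' : r ∉ convG 𝒞 (A.erase z) := by
              refine hAmin (A.erase z) (erase_subset _ _) ?_
              intro hh
              exact (erase_eq_self.mp hh) hzA
            have hfin := anti_exchange hCG (fun hh => hzr hh.symm) hr_notA' hz_notA' hzA'
            rw [insert_erase hzA] at hfin
            exact hfin hrA
      · have hYA : Y ⊆ A := by
          intro y hy
          rcases mem_insert.mp (hYC hy) with rfl | hyA
          · exact absurd hy hrY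
          · exact hyA
        refine ⟨convG 𝒞 Y, convG_mem hCG Y, ?_⟩
        refine subset_antisymm ?_ (subset_inter subset_convG hYC)
        intro z hz
        obtain ⟨hz1, hz2⟩ := mem_inter.mp hz
        rcases mem_insert.mp hz2 with rfl | hzA
        · exact absurd hz1 (hAmin Y hYA hYne)
        · by_contra hzY
          have h1 : Y ⊆ A.erase z := fun y hy =>
            mem_erase.mpr ⟨fun hh => hzY (hh ▸ hy), hYA hy⟩
          exact hext z hzA (convG_mono h1 hz1)
  · -- minimal closed superset
    intro D' hD' hCD'
    rw [← hAE]
    exact convG_min hD' (fun a ha => hCD' (mem_insert_of_mem ha))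
  · -- E.erase r is not closed
    intro hcon
    have h1 : convG 𝒞 A ⊆ E.erase r := convG_min hcon hAEr
    exact (notMem_erase r E) (h1 hrA)
  · -- criticality
    intro b hb
    rw [hCer] at hb
    exact (mem_filter.mp (hAB hb)).2

end Aux3

section Aux4

variable {α : Type*} [Fintype α] [DecidableEq α]

lemma exists_label {𝒞 : Set (Finset α)} (hCG : IsConvexGeometry 𝒞) :
    ∀ n : ℕ, ∀ X : Finset α, (univ \ X).card ≤ n → X ∈ 𝒞 →
      ∃ ℓ : α → ℕ, (∀ e, e ∈ X ↔ ℓ e = 0) ∧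
        ∀ C r, IsRootedCircuit 𝒞 C r → r ∉ X → ∃ e ∈ C.erase r, ℓ r < ℓ e := by
  intro n
  induction n with
  | zero =>
    intro X hcard _
    have h1 : univ \ X = ∅ := card_eq_zero.mp (Nat.le_antisymm hcard (Nat.zero_le _))
    have h2 : ∀ e : α, e ∈ X := fun e => sdiff_eq_empty_iff_subset.mp h1 (mem_univ e)
    exact ⟨fun _ => 0, fun e => by simp [h2 e], fun C r _ hr => absurd (h2 r) hr⟩
  | succ n ih =>
    intro X hcard hX
    by_cases hXuniv : X = univ
    · subst hXuniv
      exact ⟨fun _ => 0, fun e => by simp, fun C r _ hr => absurd (mem_univ r) hr⟩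
    · obtain ⟨e₀, he₀X, hX'⟩ := hCG.2.2.2 X hX hXuniv
      have hc : (univ \ insert e₀ X).card ≤ n := by
        have h1 : univ \ insert e₀ X = (univ \ X).erase e₀ := by
          ext a; simp only [mem_sdiff, mem_univ, true_and, mem_insert, mem_erase, not_or]
        have h2 : e₀ ∈ univ \ X := by simp [he₀X]
        rw [h1, card_erase_of_mem h2]
        have := card_pos.mpr ⟨e₀, h2⟩
        omega
      obtain ⟨ℓ', hℓ'0, hℓ'circ⟩ := ih (insert e₀ X) hc hX'
      refine ⟨fun e => if e ∈ X then 0 else if e = e₀ then 1 else ℓ' e + 1, ?_, ?_⟩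
      · intro e
        by_cases heX : e ∈ X
        · simp [heX]
        · by_cases hee : e = e₀
          · simp [heX, hee]
          · simp [heX, hee]
      · intro C r hRC hrX
        by_cases hre : r = e₀
        · -- r = e₀ : find an element of C.erase r outside insert e₀ X
          subst hre
          have hex : ∃ e ∈ C.erase r, e ∉ insert r X := by
            by_contra hc2
            push_neg at hc2
            have htr : X ∩ C = C.erase r := by
              apply subset_antisymm
              · intro z hz
                obtain ⟨hz1, hz2⟩ := mem_inter.mp hz
                exact mem_erase.mpr ⟨fun hh => hrX (hh ▸ hz1), hz2⟩
              · intro z hz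
                have h1 := hc2 z hz
                have hzr : z ≠ r := (mem_erase.mp hz).1
                have hzX : z ∈ X := by
                  rcases mem_insert.mp h1 with hh | hh
                  · exact absurd hh hzr
                  · exact hh
                exact mem_inter.mpr ⟨hzX, (mem_erase.mp hz).2⟩
            have hmem : C.erase r ∈ {Y : Finset α | ∃ X ∈ 𝒞, X ∩ C = Y} := ⟨X, hX, htr⟩
            rw [hRC.2] at hmem
            exact hmem.2 rfl
          obtain ⟨e, heC, heX'⟩ := hex
          have heX : e ∉ X := fun hh => heX' (mem_insert_of_mem hh)
          have hee : e ≠ r := fun hh => heX' (hh ▸ mem_insert_self r X)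
          refine ⟨e, heC, ?_⟩
          have h1 : ℓ' e ≠ 0 := fun hh => heX' ((hℓ'0 e).mpr hh)
          simp only [if_neg heX, if_neg hee, if_neg hrX, eq_self_iff_true, if_true]
          omega
        · -- r ∉ insert e₀ X
          have hrX' : r ∉ insert e₀ X := by
            intro hh
            rcases mem_insert.mp hh with h1 | h1
            · exact hre h1
            · exact hrX h1
          obtain ⟨e, heC, hlt⟩ := hℓ'circ C r hRC hrX'
          have h1 : ℓ' e ≠ 0 := by omega
          have heX' : e ∉ insert e₀ X := fun hh => h1 ((hℓ'0 e).mp hh)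
          have heX : e ∉ X := fun hh => heX' (mem_insert_of_mem hh)
          have hee : e ≠ e₀ := fun hh => heX' (hh ▸ mem_insert_self e₀ X)
          refine ⟨e, heC, ?_⟩
          simp only [if_neg heX, if_neg hee, if_neg hrX, if_neg hre]
          omega

end Aux4

/-- The intersection pattern of the orthants of `ℝ^U` with the open polyhedral cone
`K(ℛ₀) = ⋂_{(C,r) critical rooted circuit} K(C,r)` (a cone with at most as many facets
as critical rooted circuits) realizes the convex geometry `𝒞`. -/

theorem convex_geometry_realized_by_critical_rooted_circuits
    {α : Type*} [Fintype α] [DecidableEq α] (𝒞 : Set (Finset α))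
    (hCG : IsConvexGeometry 𝒞) :
    ∀ X : Finset α,
      (Orthant X ∩
        {x : α → ℝ | ∀ C r, IsCriticalRootedCircuit 𝒞 C r → x ∈ Kcr C r}).Nonempty
        ↔ X ∈ 𝒞 := by
  classical
  intro X
  constructor
  · -- if the orthant meets the cone, X is convex
    rintro ⟨x, hxO, hxK⟩
    by_contra hX
    have hD𝒞 : convG 𝒞 X ∈ 𝒞 := convG_mem hCG X
    set D := convG 𝒞 X with hDdef
    have hXD : X ⊆ D := subset_convG
    have hDne : D ≠ X := fun h => hX (h ▸ hD𝒞)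
    have hne : (D \ X).Nonempty := by
      rw [sdiff_nonempty]
      exact fun h => hDne (subset_antisymm h hXD)
    set n : ℝ := (Fintype.card α : ℝ) with hn
    set N : ℝ := ∑ e ∈ D \ X, x e with hN
    have hxneg : ∀ e ∈ D \ X, x e < 0 := fun e he => hxO.2 e (mem_sdiff.mp he).2
    have hNneg : N < 0 := sum_neg hxneg hne
    have hkey : ∀ r ∈ D \ X, N < (n + 1) * x r := by
      intro r hr
      obtain ⟨hrD, hrX⟩ := mem_sdiff.mp hr
      have h1 : X ⊆ D.erase r := fun a ha => mem_erase.mpr ⟨fun h => hrX (h ▸ ha), hXD ha⟩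
      have h2 : r ∈ convG 𝒞 (D.erase r) := convG_mono h1 hrD
      obtain ⟨C, hcrit, hCD⟩ := key_crit hCG hD𝒞 h2
      have hineq : (∑ e ∈ C.erase r, x e) < n * x r := hxK C r hcrit
      have hb1 : (∑ e ∈ (C.erase r) \ X, x e) ≤ ∑ e ∈ C.erase r, x e := by
        apply sum_le_sum_of_subset_of_nonneg sdiff_subset
        intro i hi hni
        have hiX : i ∈ X := by
          by_contra hc
          exact hni (mem_sdiff.mpr ⟨hi, hc⟩)
        exact le_of_lt (hxO.1 i hiX)
      have hsub2 : (C.erase r) \ X ⊆ (D \ X).erase r := by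
        intro e he
        obtain ⟨he1, he2⟩ := mem_sdiff.mp he
        obtain ⟨hne', heC⟩ := mem_erase.mp he1
        exact mem_erase.mpr ⟨hne', mem_sdiff.mpr ⟨hCD heC, he2⟩⟩
      have hb2 : (∑ e ∈ (D \ X).erase r, x e) ≤ ∑ e ∈ (C.erase r) \ X, x e := by
        have h3 := sum_le_sum_of_subset_of_nonneg (f := fun e => -x e) hsub2 ?_
        · have e1 : (∑ e ∈ (C.erase r) \ X, -x e) = -∑ e ∈ (C.erase r) \ X, x e := by
            rw [sum_neg_distrib]
          have e2 : (∑ e ∈ (D \ X).erase r, -x e) = -∑ e ∈ (D \ X).erase r, x e := by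
            rw [sum_neg_distrib]
          rw [e1, e2] at h3
          linarith
        · intro i hi _
          have : x i < 0 := hxO.2 i (mem_sdiff.mp (mem_of_mem_erase hi)).2
          show (0:ℝ) ≤ -x i
          linarith
      have hb3 : (∑ e ∈ (D \ X).erase r, x e) = N - x r := by
        have h4 := add_sum_erase (D \ X) x hr
        rw [hN]
        linarith
      linarith
    have hsum : (∑ _r ∈ D \ X, N) < ∑ r ∈ D \ X, (n + 1) * x r :=
      sum_lt_sum_of_nonempty hne hkey
    rw [sum_const, ← mul_sum, nsmul_eq_mul, ← hN] at hsum
    have hcard : ((D \ X).card : ℝ) ≤ n := by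
      rw [hn]
      exact_mod_cast card_le_univ _
    nlinarith [hsum, hNneg, hcard]
  · -- if X is convex, construct a point
    intro hX
    obtain ⟨ℓ, hℓ0, hℓcirc⟩ := exists_label hCG (univ \ X).card X le_rfl hX
    set n : ℝ := (Fintype.card α : ℝ) with hn
    have hn0 : 0 ≤ n := by rw [hn]; exact_mod_cast Nat.zero_le _
    refine ⟨fun e => if e ∈ X then 1 else -(n + 1) ^ (ℓ e), ⟨?_, ?_⟩, ?_⟩
    · intro e he
      simp [he]
    · intro e he
      simp only [if_neg he]
      have : (0:ℝ) < (n + 1) ^ (ℓ e) := pow_pos (by linarith) _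
      linarith
    · intro C r hcrit
      obtain ⟨⟨hrC, htrace⟩, -⟩ := hcrit
      show (∑ e ∈ C.erase r, _) < n * _
      by_cases hrX : r ∈ X
      · simp only [if_pos hrX]
        have hb : ∀ e ∈ C.erase r, (if e ∈ X then (1:ℝ) else -(n + 1) ^ (ℓ e)) ≤ 1 := by
          intro e _
          by_cases heX : e ∈ X
          · simp [heX]
          · simp only [if_neg heX]
            have : (0:ℝ) < (n + 1) ^ (ℓ e) := pow_pos (by linarith) _
            linarith
        have h1 := sum_le_card_nsmul _ _ 1 hb
        rw [nsmul_eq_mul, mul_one] at h1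
        have h2 : (C.erase r).card < Fintype.card α := by
          have h3 : C.erase r ⊂ univ := by
            refine ⟨subset_univ _, ?_⟩
            intro hc
            exact (notMem_erase r C) (hc (mem_univ r))
          have := card_lt_card h3
          rwa [card_univ] at this
        have h4 : ((C.erase r).card : ℝ) < n := by rw [hn]; exact_mod_cast h2
        calc (∑ e ∈ C.erase r, if e ∈ X then (1:ℝ) else -(n + 1) ^ (ℓ e))
            ≤ ((C.erase r).card : ℝ) := h1
          _ < n := h4
          _ = n * 1 := (mul_one n).symm
      · simp only [if_neg hrX]
        have hp0 : ℓ r ≠ 0 := fun h => hrX ((hℓ0 r).mpr h)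
        obtain ⟨e', he'C, hlt⟩ := hℓcirc C r ⟨hrC, htrace⟩ hrX
        have he'X : e' ∉ X := by
          intro hc
          have := (hℓ0 e').mp hc
          omega
        set f : α → ℝ := fun e => if e ∈ X then 1 else -(n + 1) ^ (ℓ e) with hf
        have hsplit : (∑ e ∈ C.erase r, f e) = f e' + ∑ e ∈ (C.erase r).erase e', f e :=
          (add_sum_erase _ f he'C).symm
        have hb : ∀ e ∈ (C.erase r).erase e', f e ≤ 1 := by
          intro e _
          rw [hf]
          by_cases heX : e ∈ X
          · simp [heX]
          · simp only [if_neg heX]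
            have : (0:ℝ) < (n + 1) ^ (ℓ e) := pow_pos (by linarith) _
            linarith
        have h1 := sum_le_card_nsmul _ _ 1 hb
        rw [nsmul_eq_mul, mul_one] at h1
        have h2 : (((C.erase r).erase e').card : ℝ) ≤ n := by
          rw [hn]; exact_mod_cast card_le_univ _
        have hfe' : f e' ≤ -(n + 1) ^ (ℓ r + 1) := by
          rw [hf]
          simp only [if_neg he'X]
          have h3 : (n + 1) ^ (ℓ r + 1) ≤ (n + 1) ^ (ℓ e') :=
            pow_le_pow_right₀ (by linarith) (by omega)
          linarith
        have ha : (n + 1) ≤ (n + 1) ^ (ℓ r) := le_self_pow₀ (by linarith) hp0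
        have hpow : (n + 1) ^ (ℓ r + 1) = (n + 1) ^ (ℓ r) * (n + 1) := pow_succ _ _
        have hfr : f r = -(n + 1) ^ (ℓ r) := by rw [hf]; simp [hrX]
        rw [hsplit]
        have : f e' + (∑ e ∈ (C.erase r).erase e', f e) ≤ -(n + 1) ^ (ℓ r + 1) + n := by
          have := le_trans h1 h2
          linarith
        have hgoal : -(n + 1) ^ (ℓ r + 1) + n < n * (-(n + 1) ^ (ℓ r)) := by
          rw [hpow]
          nlinarith
        calc f e' + ∑ e ∈ (C.erase r).erase e', f e
            ≤ -(n + 1) ^ (ℓ r + 1) + n := this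
          _ < n * (-(n + 1) ^ (ℓ r)) := hgoal
end

section
/- Let (U, 𝒞) be a convex geometry with n = |U|. For every Y ⊆ U with Y ∉ 𝒞, there exists a rooted circuit (C, r) of 𝒞 such that 𝒪(Y) ∩ K(C, r) = ∅, i.e., the hyperplane {x : n·x_r = Σ_{e ∈ C\{r}} x_e} separates the orthant 𝒪(Y) from K(C, r). -/
open Finset

section Aux
variable {α : Type*} [Fintype α] [DecidableEq α]

open Classical in
/-- Closure operator of the convex geometry. -/
noncomputable def clo (𝒞 : Set (Finset α)) (A : Finset α) : Finset α :=
  (Finset.univ.filter (fun X : Finset α => X ∈ 𝒞 ∧ A ⊆ X)).inf id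

lemma inf_mem_of_closed {𝒞 : Set (Finset α)}
    (hInt : ∀ X ∈ 𝒞, ∀ Y ∈ 𝒞, X ∩ Y ∈ 𝒞)
    {ι : Type*} {s : Finset ι} (f : ι → Finset α) (hne : s.Nonempty)
    (hf : ∀ i ∈ s, f i ∈ 𝒞) : s.inf f ∈ 𝒞 := by
  induction hne using Finset.Nonempty.cons_induction with
  | singleton a => simpa using hf a (by simp)
  | cons a s h hs ih =>
      rw [Finset.inf_cons]
      exact hInt _ (hf a (by simp)) _ (ih fun i hi => hf i (by simp [hi]))

lemma subset_clo (𝒞 : Set (Finset α)) (A : Finset α) : A ⊆ clo 𝒞 A := by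
  classical
  intro a ha
  rw [clo, Finset.mem_inf]
  intro X hX
  simp only [Finset.mem_filter] at hX
  exact hX.2.2 ha

lemma clo_min {𝒞 : Set (Finset α)} {A X : Finset α} (hX : X ∈ 𝒞) (hA : A ⊆ X) :
    clo 𝒞 A ⊆ X := by
  classical
  intro a ha
  rw [clo, Finset.mem_inf] at ha
  exact ha X (by simp [Finset.mem_filter, hX, hA])

lemma clo_mem {𝒞 : Set (Finset α)} (hu : (univ : Finset α) ∈ 𝒞)
    (hInt : ∀ X ∈ 𝒞, ∀ Y ∈ 𝒞, X ∩ Y ∈ 𝒞) (A : Finset α) : clo 𝒞 A ∈ 𝒞 := by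
  classical
  refine inf_mem_of_closed hInt id ⟨univ, ?_⟩ ?_
  · simp [Finset.mem_filter, hu]
  · intro X hX; simp only [Finset.mem_filter] at hX; exact hX.2.1

lemma clo_eq_self {𝒞 : Set (Finset α)} {X : Finset α} (hX : X ∈ 𝒞) : clo 𝒞 X = X :=
  Finset.Subset.antisymm (clo_min hX Finset.Subset.rfl) (subset_clo 𝒞 X)

lemma clo_mono {𝒞 : Set (Finset α)} (hu : (univ : Finset α) ∈ 𝒞)
    (hInt : ∀ X ∈ 𝒞, ∀ Y ∈ 𝒞, X ∩ Y ∈ 𝒞) {A B : Finset α} (hAB : A ⊆ B) :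
    clo 𝒞 A ⊆ clo 𝒞 B :=
  clo_min (clo_mem hu hInt B) (hAB.trans (subset_clo 𝒞 B))

end Aux

section Aux2
variable {α : Type*} [Fintype α] [DecidableEq α]

lemma rel_extend {𝒞 : Set (Finset α)}
    (hInt : ∀ X ∈ 𝒞, ∀ Y ∈ 𝒞, X ∩ Y ∈ 𝒞)
    (hExt : ∀ X ∈ 𝒞, X ≠ univ → ∃ e ∉ X, insert e X ∈ 𝒞) :
    ∀ n (X : Finset α), X ∈ 𝒞 → (univ \ X).card ≤ n → ∀ Z ∈ 𝒞, ¬ Z ⊆ X →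
      ∃ e ∈ Z, e ∉ X ∧ insert e (X ∩ Z) ∈ 𝒞 := by
  intro n
  induction n with
  | zero =>
      intro X hX hcard Z hZ hZX
      exfalso
      apply hZX
      have h0 : univ \ X = ∅ := Finset.card_eq_zero.mp (Nat.le_zero.mp hcard)
      have : (univ : Finset α) ⊆ X := Finset.sdiff_eq_empty_iff_subset.mp h0
      exact (Finset.subset_univ Z).trans this
  | succ n ih =>
      intro X hX hcard Z hZ hZX
      have hXne : X ≠ univ := by rintro rfl; exact hZX (Finset.subset_univ Z)
      obtain ⟨e, heX, hins⟩ := hExt X hX hXne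
      by_cases heZ : e ∈ Z
      · refine ⟨e, heZ, heX, ?_⟩
        rw [← Finset.insert_inter_of_mem heZ]
        exact hInt _ hins _ hZ
      · have h1 : ¬ Z ⊆ insert e X := by
          intro h
          apply hZX
          intro z hz
          rcases Finset.mem_insert.mp (h hz) with rfl | h'
          · exact absurd hz heZ
          · exact h'
        have h2 : (univ \ insert e X).card ≤ n := by
          have hEq : univ \ insert e X = (univ \ X).erase e := by
            ext z
            simp only [Finset.mem_sdiff, Finset.mem_univ, true_and, Finset.mem_erase,
              Finset.mem_insert]
            tauto
          rw [hEq, Finset.card_erase_of_mem (Finset.mem_sdiff.mpr ⟨Finset.mem_univ _, heX⟩)]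
          omega
        obtain ⟨e', he'Z, he'X, hc⟩ := ih (insert e X) hins h2 Z hZ h1
        refine ⟨e', he'Z, fun h => he'X (Finset.mem_insert_of_mem h), ?_⟩
        rwa [Finset.insert_inter_of_notMem heZ] at hc

lemma antiexch {𝒞 : Set (Finset α)}
    (hu : (univ : Finset α) ∈ 𝒞)
    (hInt : ∀ X ∈ 𝒞, ∀ Y ∈ 𝒞, X ∩ Y ∈ 𝒞)
    (hExt : ∀ X ∈ 𝒞, X ≠ univ → ∃ e ∉ X, insert e X ∈ 𝒞)
    {Z : Finset α} (hZ : Z ∈ 𝒞) :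
    ∀ n (X : Finset α), X ∈ 𝒞 → (Z \ X).card ≤ n → X ⊆ Z →
      ∀ a b, a ∈ Z → a ∉ X → b ∈ Z → b ∉ X → a ≠ b →
      clo 𝒞 (insert a X) = Z → clo 𝒞 (insert b X) = Z → False := by
  intro n
  induction n with
  | zero =>
      intro X _ hcard _ a b haZ haX _ _ _ _ _
      have hmem : a ∈ Z \ X := Finset.mem_sdiff.mpr ⟨haZ, haX⟩
      rw [Finset.card_eq_zero.mp (Nat.le_zero.mp hcard)] at hmem
      exact absurd hmem (Finset.notMem_empty a)
  | succ n ih =>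
      intro X hX hcard hXZ a b haZ haX hbZ hbX hab hclA hclB
      have hnsub : ¬ Z ⊆ X := fun h => haX (h haZ)
      obtain ⟨e, heZ, heX, hins⟩ :=
        rel_extend hInt hExt (univ \ X).card X hX le_rfl Z hZ hnsub
      rw [Finset.inter_eq_left.mpr hXZ] at hins
      rcases eq_or_ne e a with rfl | hea
      · rw [clo_eq_self hins] at hclA
        rcases Finset.mem_insert.mp (hclA ▸ hbZ) with h | h
        · exact hab h.symm
        · exact hbX h
      rcases eq_or_ne e b with rfl | heb
      · rw [clo_eq_self hins] at hclB
        rcases Finset.mem_insert.mp (hclB ▸ haZ) with h | h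
        · exact hab h
        · exact haX h
      · have hX'Z : insert e X ⊆ Z := Finset.insert_subset heZ hXZ
        have hcard' : (Z \ insert e X).card ≤ n := by
          have hEq : Z \ insert e X = (Z \ X).erase e := by
            ext z
            simp only [Finset.mem_sdiff, Finset.mem_erase, Finset.mem_insert]
            tauto
          rw [hEq, Finset.card_erase_of_mem (Finset.mem_sdiff.mpr ⟨heZ, heX⟩)]
          omega
        have hclA' : clo 𝒞 (insert a (insert e X)) = Z := by
          apply Finset.Subset.antisymm
          · exact clo_min hZ (Finset.insert_subset haZ hX'Z)
          · rw [← hclA]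
            exact clo_mono hu hInt (Finset.insert_subset_insert a (Finset.subset_insert e X))
        have hclB' : clo 𝒞 (insert b (insert e X)) = Z := by
          apply Finset.Subset.antisymm
          · exact clo_min hZ (Finset.insert_subset hbZ hX'Z)
          · rw [← hclB]
            exact clo_mono hu hInt (Finset.insert_subset_insert b (Finset.subset_insert e X))
        exact ih (insert e X) hins hcard' hX'Z a b haZ
          (fun h => (Finset.mem_insert.mp h).elim (fun h' => hea h'.symm) haX)
          hbZ (fun h => (Finset.mem_insert.mp h).elim (fun h' => heb h'.symm) hbX)
          hab hclA' hclB'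

end Aux2

/-- For every non-convex set `Y`, some rooted circuit yields a halfspace `K(C,r)`
disjoint from the orthant `𝒪(Y)`. -/
theorem orthant_of_nonconvex_separated_from_K
    {α : Type*} [Fintype α] [DecidableEq α] (𝒞 : Set (Finset α))
    (hCG : IsConvexGeometry 𝒞) (Y : Finset α) (hY : Y ∉ 𝒞) :
    ∃ (C : Finset α) (r : α), IsRootedCircuit 𝒞 C r ∧ Orthant Y ∩ Kcr C r = ∅ := by
  classical
  obtain ⟨h0, hu, hInt, hExt⟩ := hCG
  -- find r in closure of Y but not in Y
  have hYsub : Y ⊆ clo 𝒞 Y := subset_clo 𝒞 Y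
  have hne : clo 𝒞 Y ≠ Y := fun h => hY (h ▸ clo_mem hu hInt Y)
  obtain ⟨r, hrcl, hrY⟩ : ∃ r, r ∈ clo 𝒞 Y ∧ r ∉ Y := by
    by_contra h
    push_neg at h
    exact hne (Finset.Subset.antisymm (fun x hx => h x hx) hYsub)
  -- minimal-cardinality C₀ ⊆ Y with r ∈ clo C₀
  obtain ⟨C₀, hC₀F, hC₀min⟩ := Finset.exists_min_image
    ((Y.powerset).filter (fun A => r ∈ clo 𝒞 A)) Finset.card
    ⟨Y, by simp [Finset.mem_filter, Finset.mem_powerset, hrcl]⟩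
  simp only [Finset.mem_filter, Finset.mem_powerset] at hC₀F
  obtain ⟨hC₀Y, hrC₀⟩ := hC₀F
  have hmin : ∀ B ⊆ Y, r ∈ clo 𝒞 B → C₀.card ≤ B.card := by
    intro B hBY hrB
    exact hC₀min B (by simp [Finset.mem_filter, Finset.mem_powerset, hBY, hrB])
  have hrC₀mem : r ∉ C₀ := fun h => hrY (hC₀Y h)
  have hminer : ∀ c ∈ C₀, r ∉ clo 𝒞 (C₀.erase c) := by
    intro c hc hcon
    have h1 := hmin (C₀.erase c) ((Finset.erase_subset c C₀).trans hC₀Y) hcon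
    rw [Finset.card_erase_of_mem hc] at h1
    have h2 : 0 < C₀.card := Finset.card_pos.mpr ⟨c, hc⟩
    omega
  have hstep : ∀ c ∈ C₀, c ∉ clo 𝒞 (C₀.erase c) := by
    intro c hc hcon
    apply hminer c hc
    have hsub : C₀ ⊆ clo 𝒞 (C₀.erase c) := by
      intro x hx
      rcases eq_or_ne x c with rfl | hxc
      · exact hcon
      · exact subset_clo _ _ (Finset.mem_erase.mpr ⟨hxc, hx⟩)
    exact clo_min (clo_mem hu hInt _) hsub hrC₀
  set C : Finset α := insert r C₀ with hCdef
  have hCr : C.erase r = C₀ := Finset.erase_insert hrC₀mem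
  refine ⟨C, r, ⟨Finset.mem_insert_self r C₀, ?_⟩, ?_⟩
  · -- trace set equality
    ext S
    simp only [Set.mem_setOf_eq]
    constructor
    · rintro ⟨X, hX, rfl⟩
      refine ⟨Finset.inter_subset_right, ?_⟩
      rw [hCr]
      intro hEq
      have hsub : C₀ ⊆ X := by rw [← hEq]; exact Finset.inter_subset_left
      have hrX : r ∈ X := clo_min hX hsub hrC₀
      have : r ∈ X ∩ C := Finset.mem_inter.mpr ⟨hrX, Finset.mem_insert_self r C₀⟩
      rw [hEq] at this
      exact hrC₀mem this
    · rintro ⟨hSC, hSne⟩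
      rw [hCr] at hSne
      by_cases hrS : r ∈ S
      · -- case r ∈ S
        set T : Finset α := S.erase r with hTdef
        have hT : T ⊆ C₀ := by
          intro t ht
          obtain ⟨htr, htS⟩ := Finset.mem_erase.mp ht
          rcases Finset.mem_insert.mp (hSC htS) with h | h
          · exact absurd h htr
          · exact h
        have hS : S = insert r T := (Finset.insert_erase hrS).symm
        by_cases hTC : T = C₀
        · refine ⟨clo 𝒞 C₀, clo_mem hu hInt C₀, ?_⟩
          have hCsub : C ⊆ clo 𝒞 C₀ := Finset.insert_subset hrC₀ (subset_clo _ _)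
          rw [Finset.inter_eq_right.mpr hCsub, hS, hTC]
        · have hDne : (C₀ \ T).Nonempty :=
            Finset.sdiff_nonempty.mpr (fun h => hTC (Finset.Subset.antisymm hT h))
          have key : ∀ c : α, ∃ Xc : Finset α, Xc ∈ 𝒞 ∧
              (c ∈ C₀ \ T → (C₀.erase c ⊆ Xc ∧ c ∉ Xc ∧ r ∈ Xc)) := by
            intro c
            by_cases hc : c ∈ C₀ \ T
            · obtain ⟨hcC₀, hcT⟩ := Finset.mem_sdiff.mp hc
              obtain ⟨Xc, hXcG, hXcmax⟩ := Finset.exists_max_image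
                (Finset.univ.filter (fun X : Finset α => X ∈ 𝒞 ∧ C₀.erase c ⊆ X ∧ c ∉ X))
                Finset.card
                ⟨clo 𝒞 (C₀.erase c), by
                  simp only [Finset.mem_filter, Finset.mem_univ, true_and]
                  exact ⟨clo_mem hu hInt _, subset_clo _ _, hstep c hcC₀⟩⟩
              simp only [Finset.mem_filter, Finset.mem_univ, true_and] at hXcG
              obtain ⟨hXc𝒞, hWXc, hcXc⟩ := hXcG
              refine ⟨Xc, hXc𝒞, fun _ => ⟨hWXc, hcXc, ?_⟩⟩
              by_contra hrXc
              have hccl : c ∈ clo 𝒞 (insert r Xc) := by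
                by_contra hccl
                have hmem : clo 𝒞 (insert r Xc) ∈
                    Finset.univ.filter (fun X : Finset α => X ∈ 𝒞 ∧ C₀.erase c ⊆ X ∧ c ∉ X) := by
                  simp only [Finset.mem_filter, Finset.mem_univ, true_and]
                  exact ⟨clo_mem hu hInt _,
                    hWXc.trans ((Finset.subset_insert r Xc).trans (subset_clo _ _)), hccl⟩
                have hss : Xc ⊂ clo 𝒞 (insert r Xc) := by
                  refine Finset.ssubset_iff_subset_ne.mpr
                    ⟨(Finset.subset_insert r Xc).trans (subset_clo _ _), ?_⟩
                  intro hEq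
                  exact hrXc (hEq ▸ subset_clo _ _ (Finset.mem_insert_self r Xc))
                exact absurd (hXcmax _ hmem) (not_le.mpr (Finset.card_lt_card hss))
              have hrcl' : r ∈ clo 𝒞 (insert c Xc) := by
                have hsub : C₀ ⊆ insert c Xc := by
                  intro x hx
                  rcases eq_or_ne x c with rfl | hxc
                  · exact Finset.mem_insert_self _ _
                  · exact Finset.mem_insert_of_mem (hWXc (Finset.mem_erase.mpr ⟨hxc, hx⟩))
                exact clo_min (clo_mem hu hInt _)
                  (hsub.trans (subset_clo _ _)) hrC₀
              have hZeq : clo 𝒞 (insert c Xc) = clo 𝒞 (insert r Xc) := by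
                apply Finset.Subset.antisymm
                · exact clo_min (clo_mem hu hInt _)
                    (Finset.insert_subset hccl
                      ((Finset.subset_insert r Xc).trans (subset_clo _ _)))
                · exact clo_min (clo_mem hu hInt _)
                    (Finset.insert_subset hrcl'
                      ((Finset.subset_insert c Xc).trans (subset_clo _ _)))
              have hrc : r ≠ c := fun h => hrC₀mem (h ▸ hcC₀)
              exact antiexch hu hInt hExt (clo_mem hu hInt (insert r Xc))
                (clo 𝒞 (insert r Xc) \ Xc).card Xc hXc𝒞 le_rfl
                ((Finset.subset_insert r Xc).trans (subset_clo _ _))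
                r c (subset_clo _ _ (Finset.mem_insert_self r Xc)) hrXc hccl hcXc hrc
                rfl hZeq
            · exact ⟨univ, hu, fun h => absurd h hc⟩
          choose f hf𝒞 hfprop using key
          refine ⟨(C₀ \ T).inf f, inf_mem_of_closed hInt f hDne (fun i _ => hf𝒞 i), ?_⟩
          ext x
          simp only [Finset.mem_inter]
          constructor
          · rintro ⟨hx1, hx2⟩
            rcases Finset.mem_insert.mp hx2 with rfl | hxC₀
            · exact hrS
            by_cases hxT : x ∈ T
            · exact Finset.erase_subset r S hxT
            · have hxD : x ∈ C₀ \ T := Finset.mem_sdiff.mpr ⟨hxC₀, hxT⟩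
              exact absurd (Finset.mem_inf.mp hx1 x hxD) (hfprop x hxD).2.1
          · intro hxS
            refine ⟨?_, hSC hxS⟩
            rw [Finset.mem_inf]
            intro c hc
            obtain ⟨h1, h2, h3⟩ := hfprop c hc
            rw [hS] at hxS
            rcases Finset.mem_insert.mp hxS with rfl | hxT
            · exact h3
            · have hcT : c ∉ T := (Finset.mem_sdiff.mp hc).2
              exact h1 (Finset.mem_erase.mpr ⟨fun h => hcT (h ▸ hxT), hT hxT⟩)
      · -- case r ∉ S
        have hSC₀ : S ⊆ C₀ := by
          intro s hs
          rcases Finset.mem_insert.mp (hSC hs) with rfl | h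
          · exact absurd hs hrS
          · exact h
        refine ⟨clo 𝒞 S, clo_mem hu hInt S, ?_⟩
        apply Finset.Subset.antisymm
        · intro x hx
          obtain ⟨hx1, hx2⟩ := Finset.mem_inter.mp hx
          by_contra hxS
          rcases Finset.mem_insert.mp hx2 with rfl | hxC₀
          · have h1 := hmin S (hSC₀.trans hC₀Y) hx1
            have h2 := Finset.card_lt_card (Finset.ssubset_iff_subset_ne.mpr ⟨hSC₀, hSne⟩)
            omega
          · have hsub : S ⊆ C₀.erase x :=
              fun s hs => Finset.mem_erase.mpr ⟨fun h => hxS (h ▸ hs), hSC₀ hs⟩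
            exact hstep x hxC₀ (clo_mono hu hInt hsub hx1)
        · intro x hx
          exact Finset.mem_inter.mpr ⟨subset_clo 𝒞 S hx, hSC hx⟩
  · -- separation
    ext x
    simp only [Set.mem_inter_iff, Set.mem_empty_iff_false, iff_false, not_and]
    rintro ⟨hpos, hneg⟩ hK
    simp only [Kcr, Set.mem_setOf_eq, hCr] at hK
    have h1 : x r < 0 := hneg r hrY
    have h2 : (0:ℝ) ≤ ∑ e ∈ C₀, x e :=
      Finset.sum_nonneg fun e he => (hpos e (hC₀Y he)).le
    have h3 : (0:ℝ) < (Fintype.card α : ℝ) := by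
      exact_mod_cast Fintype.card_pos_iff.mpr ⟨r⟩
    have h4 : (Fintype.card α : ℝ) * x r < 0 := mul_neg_of_pos_of_neg h3 h1
    linarith
end
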